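/- arXiv:2108.08820 — 6 statements merged into one kernel-verified Lean document; each statement's English description precedes it below -/
import Mathlib

section
/- Let ρ > 0, ψ₀ > 0, and let ψ₁, φ, A, u, L, a, b, q, m₃₁ be real numbers with A > 0. Define the 3×3 real matrix M_s with rows ( −(Aa/ψ₀)u , 1/ψ₀ , 0 ), ( q − (ψ₁ + 2ψ₁Aa/ψ₀ − Ab)u² , 2(ψ₁/ψ₀)u , 0 ), ( m₃₁ , (φ/ψ₀)L , φu ), and set Υ₁ = (1/ψ₀²)(ψ₁ − Aa/2)² + (1/ψ₀)(Ab − ψ₁). If q/ψ₀ + Υ₁u² ≥ 0, then the characteristic polynomial of M_s factors as det(M_s − λI) = (φu − λ)(λ − λ₊ˢ)(λ − λ₋ˢ), so the eigenvalues of M_s are exactly λ₀ˢ = φu and λ±ˢ = ((2ψ₁ − Aa)/(2ψ₀))·u ± √(q/ψ₀ + Υ₁u²), and in particular all eigenvalues of M_s are real. -/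
/-! The third column of `M_s` vanishes above the diagonal, so `det (M_s - λ)` is `φu - λ` times
the characteristic polynomial of the upper-left `2 × 2` block. Completing the square in that
quadratic leaves the discriminant `q/ψ₀ + Υ₁u²`, whose square root gives `λ±ˢ`. The resulting
real factorisation of the characteristic polynomial survives the map `ℝ → ℂ`, so even the complex
spectrum consists of `φu, λ₊ˢ, λ₋ˢ`. -/

open Matrix

/-- The coefficient matrix `M_s` (axial direction) of the quasilinear form of the
2D blood-flow model, with the state abstracted into real parameters. -/
noncomputable def Ms (ψ₀ ψ₁ φ A u L a b q m₃₁ : ℝ) : Matrix (Fin 3) (Fin 3) ℝ :=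
  !![-(A * a / ψ₀) * u, 1 / ψ₀, 0;
     q - (ψ₁ + 2 * ψ₁ * A * a / ψ₀ - A * b) * u ^ 2, 2 * (ψ₁ / ψ₀) * u, 0;
     m₃₁, (φ / ψ₀) * L, φ * u]

open Polynomial

namespace Matrix

theorem det_sub_smul_one_fin_three_of_block_lower {R : Type*} [CommRing R]
    (M : Matrix (Fin 3) (Fin 3) R) (h02 : M 0 2 = 0) (h12 : M 1 2 = 0) (t : R) :
    (M - t • (1 : Matrix (Fin 3) (Fin 3) R)).det
      = (M 2 2 - t) * ((M 0 0 - t) * (M 1 1 - t) - M 0 1 * M 1 0) := by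
  simp only [det_fin_three, sub_apply, smul_apply, one_apply_eq, one_apply_ne, ne_eq,
    Fin.reduceEq, not_false_eq_true, smul_eq_mul, mul_one, mul_zero, sub_zero, h02, h12]
  ring

theorem charpoly_fin_three_eq_of_det_sub_smul_one {K : Type*} [Field K] [Infinite K]
    (M : Matrix (Fin 3) (Fin 3) K) (a b c : K)
    (h : ∀ t : K, (M - t • (1 : Matrix (Fin 3) (Fin 3) K)).det = (a - t) * (t - b) * (t - c)) :
    M.charpoly = (X - C a) * (X - C b) * (X - C c) := by
  refine Polynomial.funext fun t => ?_
  have hneg : scalar (Fin 3) t - M = -(M - t • (1 : Matrix (Fin 3) (Fin 3) K)) := by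
    rw [smul_one_eq_diagonal]; simp [scalar_apply]
  rw [eval_charpoly, hneg, det_neg, h]
  simp only [Fintype.card_fin, eval_mul, eval_sub, eval_X, eval_C]
  ring

theorem spectrum_eq_of_charpoly_eq {K : Type*} [Field K] {n : Type*} [Fintype n]
    [DecidableEq n] (M : Matrix n n K) (a b c : K)
    (h : M.charpoly = (X - C a) * (X - C b) * (X - C c)) :
    spectrum K M = {a, b, c} := by
  ext t
  simp [mem_spectrum_iff_isRoot_charpoly, h, sub_eq_zero, or_assoc]

end Matrix

theorem det_Ms_sub_smul_one (ψ₀ ψ₁ φ A u L a b q m₃₁ t : ℝ) :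
    (Ms ψ₀ ψ₁ φ A u L a b q m₃₁ - t • (1 : Matrix (Fin 3) (Fin 3) ℝ)).det
      = (φ * u - t) * ((t - (2 * ψ₁ - A * a) / (2 * ψ₀) * u) ^ 2
          - (q / ψ₀ + ((1 / ψ₀ ^ 2) * (ψ₁ - A * a / 2) ^ 2 + (1 / ψ₀) * (A * b - ψ₁)) * u ^ 2)) := by
  rw [det_sub_smul_one_fin_three_of_block_lower _ rfl rfl]
  simp only [Ms, of_apply, cons_val', cons_val_zero, cons_val_one, cons_val_two, head_cons,
    tail_cons, head_fin_const, empty_val', cons_val_fin_one]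
  ring

theorem stmt0_general (ψ₀ ψ₁ φ A u L a b q m₃₁ : ℝ)
    (Υ₁ : ℝ)
    (hΥ₁ : Υ₁ = (1 / ψ₀ ^ 2) * (ψ₁ - A * a / 2) ^ 2 + (1 / ψ₀) * (A * b - ψ₁))
    (lamP lamM : ℝ)
    (hlamP : lamP = ((2 * ψ₁ - A * a) / (2 * ψ₀)) * u + Real.sqrt (q / ψ₀ + Υ₁ * u ^ 2))
    (hlamM : lamM = ((2 * ψ₁ - A * a) / (2 * ψ₀)) * u - Real.sqrt (q / ψ₀ + Υ₁ * u ^ 2))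
    (hnn : 0 ≤ q / ψ₀ + Υ₁ * u ^ 2) :
    (∀ lam : ℝ,
      (Ms ψ₀ ψ₁ φ A u L a b q m₃₁ - lam • (1 : Matrix (Fin 3) (Fin 3) ℝ)).det
        = (φ * u - lam) * (lam - lamP) * (lam - lamM)) ∧
    spectrum ℝ (Ms ψ₀ ψ₁ φ A u L a b q m₃₁) = {φ * u, lamP, lamM} ∧
    (∀ z ∈ spectrum ℂ ((Ms ψ₀ ψ₁ φ A u L a b q m₃₁).map (fun x : ℝ => (x : ℂ))),
      z.im = 0) := by
  have hdet (t : ℝ) : (Ms ψ₀ ψ₁ φ A u L a b q m₃₁ - t • (1 : Matrix (Fin 3) (Fin 3) ℝ)).det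
      = (φ * u - t) * (t - lamP) * (t - lamM) := by
    rw [det_Ms_sub_smul_one, ← hΥ₁, hlamP, hlamM]
    linear_combination (φ * u - t) * Real.sq_sqrt hnn
  have hchar := charpoly_fin_three_eq_of_det_sub_smul_one _ _ _ _ hdet
  refine ⟨hdet, spectrum_eq_of_charpoly_eq _ _ _ _ hchar, fun z hz => ?_⟩
  have hcharC : ((Ms ψ₀ ψ₁ φ A u L a b q m₃₁).map Complex.ofRealHom).charpoly
      = (X - C ((φ * u : ℝ) : ℂ)) * (X - C (lamP : ℂ)) * (X - C (lamM : ℂ)) := by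
    simp [charpoly_map, hchar, Polynomial.map_mul]
  rw [show (fun x : ℝ => (x : ℂ)) = Complex.ofRealHom from rfl,
    spectrum_eq_of_charpoly_eq _ _ _ _ hcharC] at hz
  rcases hz with rfl | rfl | rfl <;> exact Complex.ofReal_im _

theorem stmt0 (ρ ψ₀ ψ₁ φ A u L a b q m₃₁ : ℝ)
    (hρ : 0 < ρ) (hψ₀ : 0 < ψ₀) (hA : 0 < A)
    (Υ₁ : ℝ)
    (hΥ₁ : Υ₁ = (1 / ψ₀ ^ 2) * (ψ₁ - A * a / 2) ^ 2 + (1 / ψ₀) * (A * b - ψ₁))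
    (lamP lamM : ℝ)
    (hlamP : lamP = ((2 * ψ₁ - A * a) / (2 * ψ₀)) * u + Real.sqrt (q / ψ₀ + Υ₁ * u ^ 2))
    (hlamM : lamM = ((2 * ψ₁ - A * a) / (2 * ψ₀)) * u - Real.sqrt (q / ψ₀ + Υ₁ * u ^ 2))
    (hnn : 0 ≤ q / ψ₀ + Υ₁ * u ^ 2) :
    (∀ lam : ℝ,
      (Ms ψ₀ ψ₁ φ A u L a b q m₃₁ - lam • (1 : Matrix (Fin 3) (Fin 3) ℝ)).det
        = (φ * u - lam) * (lam - lamP) * (lam - lamM)) ∧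
    spectrum ℝ (Ms ψ₀ ψ₁ φ A u L a b q m₃₁) = {φ * u, lamP, lamM} ∧
    (∀ z ∈ spectrum ℂ ((Ms ψ₀ ψ₁ φ A u L a b q m₃₁).map (fun x : ℝ => (x : ℂ))),
      z.im = 0) :=
  stmt0_general ψ₀ ψ₁ φ A u L a b q m₃₁ Υ₁ hΥ₁ lamP lamM hlamP hlamM hnn
end

section
/- Let q > 0, A_θ > 0, R₀ ≠ 0, and let ψ₁, ψ₂, φ, u be real numbers satisfying: (i) ψ₁ > 1; (ii) 20ψ₁² + φ(9ψ₂ + 5φ) − ψ₁(6 + 9ψ₂ + 19φ) > 0; (iii) 16ψ₁⁴ − ψ₂φ³ − 4ψ₁³(5 + 2ψ₂ + 4φ) + ψ₁φ(3ψ₂(φ − 3) + φ(φ − 5)) + ψ₁²(3 + φ(19 + 2φ) + ψ₂(9 + 6φ)) > 0; and (iv) −32ψ₁² − 27ψ₂² − 18ψ₂φ + φ² + 4ψ₁(−3 + 18ψ₂ + 4φ) > 0. Define, for real n_s, n_θ, the coefficients c₂ = (2ψ₁ + φ)un_s, c₁ = q(n_s² + (R₀²/A_θ)n_θ²) + (−ψ₁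 − 2ψ₁φ)u²n_s², c₀ = (−q + ψ₁u²)φn_s³u + q(R₀²/A_θ)(ψ₂ − 2ψ₁)n_θ²un_s, and the discriminant Δ = −27c₀² − 18c₂c₁c₀ + 4c₁³ − 4c₂³c₀ + c₂²c₁². Then Δ ≥ 0 for all (n_s, n_θ) ∈ ℝ², and Δ > 0 whenever n_θ ≠ 0; consequently, for n_θ ≠ 0 the polynomial −λ³ + c₂λ² + c₁λ + c₀ (the characteristic polynomial of n_sM_s + n_θR₀M_θ) has three distinct real roots. -/
/-!
Put `a = u nₛ`, `P = q nₛ²` and `B = q (R₀²/A_θ) n_θ² ≥ 0`. As a polynomial in `B` the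
discriminant is `4B³ + (12P + (iv)·a²) B² + (12P² + 4(ii)·a²P + 4(iii)·a⁴) B
+ 4((ψ₁² - ψ₁)a² + P)((φ² - 2ψ₁φ + ψ₁)a² - P)²`, where (ii)–(iv) stand for the polynomials
assumed positive; by (i) every coefficient is nonnegative, so `Δ ≥ 4B³`, which is positive
once `n_θ ≠ 0`. A real cubic with positive discriminant has three distinct real roots.
-/

theorem cubic_eq_mul_of_roots {K : Type*} [CommRing K] [IsDomain K] {a b c x y z : K}
    (hxy : x ≠ y) (hxz : x ≠ z) (hyz : y ≠ z)
    (hx : x ^ 3 + a * x ^ 2 + b * x + c = 0) (hy : y ^ 3 + a * y ^ 2 + b * y + c = 0)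
    (hz : z ^ 3 + a * z ^ 2 + b * z + c = 0) (t : K) :
    t ^ 3 + a * t ^ 2 + b * t + c = (t - x) * (t - y) * (t - z) := by
  have hxy' : x ^ 2 + x * y + y ^ 2 + a * (x + y) + b = 0 :=
    (mul_eq_zero.1 (by linear_combination hx - hy)).resolve_left (sub_ne_zero.2 hxy)
  have hxz' : x ^ 2 + x * z + z ^ 2 + a * (x + z) + b = 0 :=
    (mul_eq_zero.1 (by linear_combination hx - hz)).resolve_left (sub_ne_zero.2 hxz)
  have hsum : x + y + z + a = 0 :=
    (mul_eq_zero.1 (by linear_combination hxy' - hxz')).resolve_left (sub_ne_zero.2 hyz)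
  linear_combination (t ^ 2 - (x + y) * t + x * y) * hsum + (t - x) * hxy' + hx

theorem exists_three_roots_depressed_cubic {p q : ℝ} (h : 0 < -4 * p ^ 3 - 27 * q ^ 2) :
    ∃ x y z : ℝ, x < y ∧ y < z ∧
      x ^ 3 + p * x + q = 0 ∧ y ^ 3 + p * y + q = 0 ∧ z ^ 3 + p * z + q = 0 := by
  have hp : 0 < -p / 3 := by
    by_contra! hp
    nlinarith [pow_nonneg (by linarith : 0 ≤ p) 3, sq_nonneg q]
  obtain ⟨s, hs, rfl⟩ : ∃ s : ℝ, 0 < s ∧ p = -3 * s ^ 2 :=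
    ⟨√(-p / 3), Real.sqrt_pos.2 hp, by rw [Real.sq_sqrt hp.le]; ring⟩
  -- the cubic takes the values `q - 2s³ < 0 < q + 2s³` alternately at `-2s, -s, s, 2s`
  obtain ⟨hq₁, hq₂⟩ : -(2 * s ^ 3) < q ∧ q < 2 * s ^ 3 :=
    abs_lt_of_sq_lt_sq' (by nlinarith) (by positivity)
  have hf : Continuous fun t : ℝ => t ^ 3 + -3 * s ^ 2 * t + q := by fun_prop
  obtain ⟨x, ⟨-, hx⟩, hfx⟩ := intermediate_value_Ioo (by linarith : -2 * s ≤ -s) hf.continuousOn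
    (show (0 : ℝ) ∈ Set.Ioo _ _ from ⟨by nlinarith, by nlinarith⟩)
  obtain ⟨y, ⟨hy₁, hy₂⟩, hfy⟩ := intermediate_value_Ioo' (by linarith : -s ≤ s) hf.continuousOn
    (show (0 : ℝ) ∈ Set.Ioo _ _ from ⟨by nlinarith, by nlinarith⟩)
  obtain ⟨z, ⟨hz, -⟩, hfz⟩ := intermediate_value_Ioo (by linarith : s ≤ 2 * s) hf.continuousOn
    (show (0 : ℝ) ∈ Set.Ioo _ _ from ⟨by nlinarith, by nlinarith⟩)
  exact ⟨x, y, z, hx.trans hy₁, hy₂.trans hz, hfx, hfy, hfz⟩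

theorem exists_three_roots_of_disc_pos {c₂ c₁ c₀ : ℝ}
    (h : 0 < -27 * c₀ ^ 2 - 18 * c₂ * c₁ * c₀ + 4 * c₁ ^ 3 - 4 * c₂ ^ 3 * c₀
      + c₂ ^ 2 * c₁ ^ 2) :
    ∃ x y z : ℝ, x ≠ y ∧ x ≠ z ∧ y ≠ z ∧
      ∀ t : ℝ, -t ^ 3 + c₂ * t ^ 2 + c₁ * t + c₀ = -((t - x) * (t - y) * (t - z)) := by
  obtain ⟨x, y, z, hxy, hyz, hx, hy, hz⟩ :=
    exists_three_roots_depressed_cubic (p := -c₁ - c₂ ^ 2 / 3)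
      (q := -c₀ - c₁ * c₂ / 3 - 2 * c₂ ^ 3 / 27) (by linear_combination h)
  have hXY : x + c₂ / 3 < y + c₂ / 3 := by linarith
  have hYZ : y + c₂ / 3 < z + c₂ / 3 := by linarith
  have hfactor := cubic_eq_mul_of_roots (a := -c₂) (b := -c₁) (c := -c₀)
    hXY.ne (hXY.trans hYZ).ne hYZ.ne
    (by linear_combination hx) (by linear_combination hy) (by linear_combination hz)
  exact ⟨_, _, _, hXY.ne, (hXY.trans hYZ).ne, hYZ.ne,
    fun t => by linear_combination -(hfactor t)⟩

theorem four_mul_cube_le_disc {ψ₁ ψ₂ φ a P B c₂ c₁ c₀ : ℝ} (h1 : 1 ≤ ψ₁)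
    (h2 : 0 ≤ 20 * ψ₁ ^ 2 + φ * (9 * ψ₂ + 5 * φ) - ψ₁ * (6 + 9 * ψ₂ + 19 * φ))
    (h3 : 0 ≤ 16 * ψ₁ ^ 4 - ψ₂ * φ ^ 3 - 4 * ψ₁ ^ 3 * (5 + 2 * ψ₂ + 4 * φ)
        + ψ₁ * φ * (3 * ψ₂ * (φ - 3) + φ * (φ - 5))
        + ψ₁ ^ 2 * (3 + φ * (19 + 2 * φ) + ψ₂ * (9 + 6 * φ)))
    (h4 : 0 ≤ -32 * ψ₁ ^ 2 - 27 * ψ₂ ^ 2 - 18 * ψ₂ * φ + φ ^ 2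
        + 4 * ψ₁ * (-3 + 18 * ψ₂ + 4 * φ))
    (hP : 0 ≤ P) (hB : 0 ≤ B)
    (hc₂ : c₂ = (2 * ψ₁ + φ) * a)
    (hc₁ : c₁ = P + B - (ψ₁ + 2 * ψ₁ * φ) * a ^ 2)
    (hc₀ : c₀ = -(φ * a * P) + ψ₁ * φ * a ^ 3 + (ψ₂ - 2 * ψ₁) * a * B) :
    4 * B ^ 3 ≤ -27 * c₀ ^ 2 - 18 * c₂ * c₁ * c₀ + 4 * c₁ ^ 3 - 4 * c₂ ^ 3 * c₀
      + c₂ ^ 2 * c₁ ^ 2 := by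
  subst hc₂ hc₁ hc₀
  have ha : 0 ≤ a ^ 2 := sq_nonneg a
  have hE : 0 ≤ (ψ₁ ^ 2 - ψ₁) * a ^ 2 + P :=
    add_nonneg (mul_nonneg (by nlinarith) ha) hP
  linear_combination 4 * mul_nonneg hE (sq_nonneg ((φ ^ 2 - 2 * ψ₁ * φ + ψ₁) * a ^ 2 - P))
    + 12 * mul_nonneg hB (sq_nonneg P) + 4 * mul_nonneg (mul_nonneg (mul_nonneg hB h2) ha) hP
    + 4 * mul_nonneg (mul_nonneg hB h3) (mul_nonneg ha ha)
    + 12 * mul_nonneg (mul_nonneg hB hB) hP + mul_nonneg (mul_nonneg (mul_nonneg hB hB) h4) ha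

theorem stmt7 (q Aθ R₀ ψ₁ ψ₂ φ u : ℝ)
    (hq : 0 < q) (hAθ : 0 < Aθ) (hR₀ : R₀ ≠ 0)
    (h1 : 1 < ψ₁)
    (h2 : 0 < 20 * ψ₁ ^ 2 + φ * (9 * ψ₂ + 5 * φ) - ψ₁ * (6 + 9 * ψ₂ + 19 * φ))
    (h3 : 0 < 16 * ψ₁ ^ 4 - ψ₂ * φ ^ 3 - 4 * ψ₁ ^ 3 * (5 + 2 * ψ₂ + 4 * φ)
        + ψ₁ * φ * (3 * ψ₂ * (φ - 3) + φ * (φ - 5))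
        + ψ₁ ^ 2 * (3 + φ * (19 + 2 * φ) + ψ₂ * (9 + 6 * φ)))
    (h4 : 0 < -32 * ψ₁ ^ 2 - 27 * ψ₂ ^ 2 - 18 * ψ₂ * φ + φ ^ 2
        + 4 * ψ₁ * (-3 + 18 * ψ₂ + 4 * φ)) :
    ∀ nₛ nθ : ℝ,
      let c₂ := (2 * ψ₁ + φ) * u * nₛ
      let c₁ := q * (nₛ ^ 2 + R₀ ^ 2 / Aθ * nθ ^ 2) + (-ψ₁ - 2 * ψ₁ * φ) * u ^ 2 * nₛ ^ 2
      let c₀ := (-q + ψ₁ * u ^ 2) * φ * nₛ ^ 3 * u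
          + q * (R₀ ^ 2 / Aθ) * (ψ₂ - 2 * ψ₁) * nθ ^ 2 * u * nₛ
      let Δ := -27 * c₀ ^ 2 - 18 * c₂ * c₁ * c₀ + 4 * c₁ ^ 3 - 4 * c₂ ^ 3 * c₀
          + c₂ ^ 2 * c₁ ^ 2
      0 ≤ Δ ∧
      (nθ ≠ 0 → 0 < Δ ∧
        ∃ x y z : ℝ, x ≠ y ∧ x ≠ z ∧ y ≠ z ∧
          ∀ lam : ℝ, -lam ^ 3 + c₂ * lam ^ 2 + c₁ * lam + c₀
            = -((lam - x) * (lam - y) * (lam - z))) := by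
  intro nₛ nθ c₂ c₁ c₀ Δ
  have hB : 0 ≤ q * (R₀ ^ 2 / Aθ) * nθ ^ 2 := by positivity
  have hΔ : 4 * (q * (R₀ ^ 2 / Aθ) * nθ ^ 2) ^ 3 ≤ Δ :=
    four_mul_cube_le_disc (a := u * nₛ) h1.le h2.le h3.le h4.le
      (by positivity : 0 ≤ q * nₛ ^ 2) hB (by ring) (by ring) (by ring)
  refine ⟨le_trans (by positivity) hΔ, fun hnθ => ?_⟩
  have hΔ_pos : 0 < Δ := lt_of_lt_of_le (by positivity) hΔ
  exact ⟨hΔ_pos, exists_three_roots_of_disc_pos hΔ_pos⟩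
end

section
/- Let β > 0 and let G₀ = G₀(s) > 0 and A₀ = A₀(s) > 0 be differentiable functions. For A > 0 define p(A, s) = G₀(s)·((A/A₀(s))^{β/2} − 1), p̂(A, s) = (β/(β+2))·p(A,s) − (β/(β+2))·G₀(s)·(A₀(s) − A)/A, and p̄ = p − p̂. Then for every A > 0 and every s, the partial derivative of p̄ with respect to s at fixed A satisfies ∂₂p̄(A, s) = (p̄(A,s)/G₀(s))·G₀'(s) − (p̂(A,s)/A₀(s))·A₀'(s). -/
/-!
Write `x = A / A₀` and `c = β / (β + 2)`. Then `p̄ = G₀ · f(x)` and `p̂ = G₀ · g(x)` with the shapes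
`f(x) = (1 - c)(x^{β/2} - 1) + c(x⁻¹ - 1)` (`pbarShape`) and `g(x) = c(x^{β/2} - 1) - c(x⁻¹ - 1)`
(`phatShape`), and the choice of `c` makes `x f'(x) = g(x)`. Since `∂ₛ x = -x A₀'/A₀`, the product
and chain rules give
`∂ₛ p̄ = G₀' f(x) - G₀ x f'(x) A₀'/A₀ = (p̄/G₀) G₀' - (p̂/A₀) A₀'`.
-/

theorem HasDerivAt.mul_comp_const_div {G A₀ f : ℝ → ℝ} {G' A₀' f' A s : ℝ}
    (hG : HasDerivAt G G' s) (hA₀ : HasDerivAt A₀ A₀' s) (hA₀s : A₀ s ≠ 0)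
    (hf : HasDerivAt f f' (A / A₀ s)) :
    HasDerivAt (fun t => G t * f (A / A₀ t))
      (G' * f (A / A₀ s) - G s * (A / A₀ s * f') / A₀ s * A₀') s := by
  have hx : HasDerivAt (fun t => A / A₀ t) ((0 * A₀ s - A * A₀') / A₀ s ^ 2) s :=
    (hasDerivAt_const s A).div hA₀ hA₀s
  refine (hG.mul (hf.comp s hx)).congr_deriv ?_
  rw [Function.comp_apply]
  field_simp
  ring

noncomputable def pbarShape (β x : ℝ) : ℝ :=
  (1 - β / (β + 2)) * (x ^ (β / 2) - 1) + β / (β + 2) * (x⁻¹ - 1)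

noncomputable def phatShape (β x : ℝ) : ℝ :=
  β / (β + 2) * (x ^ (β / 2) - 1) - β / (β + 2) * (x⁻¹ - 1)

theorem hasDerivAt_pbarShape {β x : ℝ} (hβ : β + 2 ≠ 0) (hx : x ≠ 0) :
    HasDerivAt (pbarShape β) (phatShape β x / x) x := by
  have hpow := (Real.hasDerivAt_rpow_const (p := β / 2) (Or.inl hx)).sub_const 1
  have hinv := (hasDerivAt_inv hx).sub_const 1
  refine ((hpow.const_mul (1 - β / (β + 2))).add (hinv.const_mul (β / (β + 2)))).congr_deriv ?_
  rw [Real.rpow_sub_one hx]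
  unfold phatShape
  field_simp
  ring

theorem stmt10 (β : ℝ) (hβ : 0 < β)
    (G₀ A₀ : ℝ → ℝ)
    (hG₀ : Differentiable ℝ G₀) (hA₀ : Differentiable ℝ A₀)
    (hG₀pos : ∀ s, 0 < G₀ s) (hA₀pos : ∀ s, 0 < A₀ s) :
    let p : ℝ → ℝ → ℝ := fun A s => G₀ s * ((A / A₀ s) ^ (β / 2) - 1)
    let phat : ℝ → ℝ → ℝ := fun A s =>
      β / (β + 2) * p A s - β / (β + 2) * G₀ s * (A₀ s - A) / A
    let pbar : ℝ → ℝ → ℝ := fun A s => p A s - phat A s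
    ∀ A : ℝ, 0 < A → ∀ s : ℝ,
      deriv (fun s' => pbar A s') s
        = pbar A s / G₀ s * deriv G₀ s - phat A s / A₀ s * deriv A₀ s := by
  intro p phat pbar A hA s
  have hA₀s : A₀ s ≠ 0 := (hA₀pos s).ne'
  have hphat : ∀ t, phat A t = G₀ t * phatShape β (A / A₀ t) := fun t => by
    have hA₀t : A₀ t ≠ 0 := (hA₀pos t).ne'
    simp only [phat, p, phatShape]
    field_simp
  have hpbar : (fun t => pbar A t) = fun t => G₀ t * pbarShape β (A / A₀ t) := funext fun t => by
    simp only [pbar, hphat, p, pbarShape, phatShape]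
    ring
  have hx : A / A₀ s ≠ 0 := div_ne_zero hA.ne' hA₀s
  have hpbar_s : pbar A s = G₀ s * pbarShape β (A / A₀ s) := congrFun hpbar s
  rw [hpbar, hpbar_s, ((hG₀ s).hasDerivAt.mul_comp_const_div (hA₀ s).hasDerivAt hA₀s
    (hasDerivAt_pbarShape (by positivity) hx)).deriv, hphat, mul_div_cancel₀ _ hx,
    mul_div_cancel_left₀ _ (hG₀pos s).ne', mul_comm]
end

section
/- Fix Δs, Δθ, Δt > 0 and a rectangular grid of cells indexed by (j,k). At each s-interface (j+1/2, k) suppose given real numbers A^−, A^+ ≥ 0, u^−, u^+, and local speeds a⁺ ≥ max{u^−, u^+, 0} and a⁻ ≤ min{u^−, u^+, 0} with a⁺ > a⁻, and define the first-component flux H^F = (a⁺A^−u^− − a⁻A^+u^+)/(a⁺ − a⁻) + a⁺a⁻(A^+ − A^−)/(a⁺ − a⁻); analogously at each θ-interface (j, k+1/2) with values A^±, ω^±, speeds b⁺ ≥ max{ω^−, ω^+, 0}, b⁻ ≤ min{ω^−, ω^+, 0} with b⁺ > b⁻, and flux H^G. Suppose each cell average satisfies Ā_{j,k} = (1/4)·(A^+_{j−1/2,k}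 + A^−_{j+1/2,k} + A^−_{j,k+1/2} + A^+_{j,k−1/2}), and the CFL condition Δt ≤ (1/4)·min{Δs/a, Δθ/b} holds, where a = max over s-interfaces of max(a⁺, −a⁻) and b = max over θ-interfaces of max(b⁺, −b⁻). Then the forward-Euler update Ā_{j,k}(t+Δt) = Ā_{j,k} − (Δt/Δs)·(H^F_{j+1/2,k} − H^F_{j−1/2,k}) − (Δt/Δθ)·(H^G_{j,k+1/2} − H^G_{j,k−1/2}) satisfies Ā_{j,k}(t+Δt) ≥ 0 for all (j,k). Consequently, any convex combination of such Euler steps (in particular the second-order SSP Runge–Kutta method) preserves nonnegativity of the cell averages of A. -/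
/-!
Multiplying the first-component flux by `a⁺ - a⁻` gives
`a⁺ A⁻ (u⁻ - a⁻) + a⁻ A⁺ (a⁺ - u⁺)`, a nonnegative multiple of `A⁻` plus a nonpositive multiple
of `A⁺`. Hence `a⁻ A⁺ ≤ H ≤ a⁺ A⁻`: the flux through an interface is bounded by what the
reconstruction puts on its upwind side. Under the CFL condition each of the four interface fluxes
of a cell therefore removes at most a quarter of the adjacent reconstructed value, and the
corrected reconstruction writes the cell average as exactly the mean of those four values.
-/

section CentralUpwindFlux

variable {p m AM AP uM uP : ℝ}

/-- First component of the central-upwind flux with one-sided speeds `p = a⁺`, `m = a⁻`. -/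
noncomputable def centralUpwindFlux (p m AM AP uM uP : ℝ) : ℝ :=
  (p * (AM * uM) - m * (AP * uP)) / (p - m) + p * m * (AP - AM) / (p - m)

theorem centralUpwindFlux_eq :
    centralUpwindFlux p m AM AP uM uP = (p * AM * (uM - m) + m * AP * (p - uP)) / (p - m) := by
  rw [centralUpwindFlux, ← add_div]
  ring_nf

theorem centralUpwindFlux_le (hAM : 0 ≤ AM) (hAP : 0 ≤ AP)
    (hp : uM ≤ p ∧ uP ≤ p ∧ 0 ≤ p) (hm : m ≤ 0) (hgap : m < p) :
    centralUpwindFlux p m AM AP uM uP ≤ p * AM := by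
  obtain ⟨huM, huP, hp0⟩ := hp
  rw [centralUpwindFlux_eq, div_le_iff₀ (sub_pos.2 hgap)]
  have hR : m * AP * (p - uP) ≤ 0 :=
    mul_nonpos_of_nonpos_of_nonneg (mul_nonpos_of_nonpos_of_nonneg hm hAP) (sub_nonneg.2 huP)
  have hL : p * AM * (uM - m) ≤ p * AM * (p - m) :=
    mul_le_mul_of_nonneg_left (by linarith) (mul_nonneg hp0 hAM)
  linarith

theorem le_centralUpwindFlux (hAM : 0 ≤ AM) (hAP : 0 ≤ AP) (hp0 : 0 ≤ p)
    (hm : m ≤ uM ∧ m ≤ uP ∧ m ≤ 0) (hgap : m < p) :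
    m * AP ≤ centralUpwindFlux p m AM AP uM uP := by
  obtain ⟨hmuM, hmuP, hm0⟩ := hm
  rw [centralUpwindFlux_eq, le_div_iff₀ (sub_pos.2 hgap)]
  have hL : 0 ≤ p * AM * (uM - m) := mul_nonneg (mul_nonneg hp0 hAM) (sub_nonneg.2 hmuM)
  have hR : m * AP * (p - m) ≤ m * AP * (p - uP) :=
    mul_le_mul_of_nonpos_left (by linarith) (mul_nonpos_of_nonpos_of_nonneg hm0 hAP)
  linarith

theorem centralUpwindFlux_cfl_bounds {ν a : ℝ} (hν : 0 ≤ ν) (hνa : ν * a ≤ 1 / 4)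
    (hAM : 0 ≤ AM) (hAP : 0 ≤ AP)
    (hp : uM ≤ p ∧ uP ≤ p ∧ 0 ≤ p) (hm : m ≤ uM ∧ m ≤ uP ∧ m ≤ 0) (hgap : m < p)
    (hpa : p ≤ a) (hma : -m ≤ a) :
    -(AP / 4) ≤ ν * centralUpwindFlux p m AM AP uM uP ∧
      ν * centralUpwindFlux p m AM AP uM uP ≤ AM / 4 := by
  have hlow := le_centralUpwindFlux hAM hAP hp.2.2 hm hgap
  have hup := centralUpwindFlux_le hAM hAP hp hm.2.2 hgap
  constructor
  · calc -(AP / 4) ≤ -(ν * a * AP) := by nlinarith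
      _ ≤ ν * (m * AP) := by nlinarith [mul_le_mul_of_nonneg_right hma hAP]
      _ ≤ _ := mul_le_mul_of_nonneg_left hlow hν
  · calc ν * centralUpwindFlux p m AM AP uM uP ≤ ν * (p * AM) :=
          mul_le_mul_of_nonneg_left hup hν
      _ ≤ ν * a * AM := by nlinarith [mul_le_mul_of_nonneg_right hpa hAM]
      _ ≤ AM / 4 := by nlinarith

end CentralUpwindFlux

theorem div_mul_le_of_le_mul_div {Δt Δs a c : ℝ} (hΔs : 0 < Δs) (ha : 0 < a)
    (h : Δt ≤ c * (Δs / a)) : Δt / Δs * a ≤ c := by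
  rw [mul_div_assoc', le_div_iff₀ ha] at h
  rw [div_mul_eq_mul_div, div_le_iff₀ hΔs]
  linarith

/-- **Positivity-preserving property** (Proposition 4.2): under the CFL condition, the
forward-Euler update of the first component (the cell averages of `A`) of the
central-upwind scheme stays nonnegative; consequently every convex combination of such
Euler updates with the old nonnegative averages (in particular the second-order SSP
Runge–Kutta step) stays nonnegative as well. -/
theorem stmt13 (Δs Δθ Δt : ℝ) (hΔs : 0 < Δs) (hΔθ : 0 < Δθ) (hΔt : 0 < Δt)
    -- reconstructed data at the s-interfaces (j+1/2,k)
    (AsM AsP usM usP ap am : ℤ → ℤ → ℝ)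
    -- reconstructed data at the θ-interfaces (j,k+1/2)
    (AθM AθP ωM ωP bp bm : ℤ → ℤ → ℝ)
    (hAsM : ∀ j k, 0 ≤ AsM j k) (hAsP : ∀ j k, 0 ≤ AsP j k)
    (hAθM : ∀ j k, 0 ≤ AθM j k) (hAθP : ∀ j k, 0 ≤ AθP j k)
    -- a⁺ ≥ max{u⁻, u⁺, 0},  a⁻ ≤ min{u⁻, u⁺, 0},  a⁺ > a⁻
    (hap : ∀ j k, usM j k ≤ ap j k ∧ usP j k ≤ ap j k ∧ 0 ≤ ap j k)
    (ham : ∀ j k, am j k ≤ usM j k ∧ am j k ≤ usP j k ∧ am j k ≤ 0)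
    (hagap : ∀ j k, am j k < ap j k)
    (hbp : ∀ j k, ωM j k ≤ bp j k ∧ ωP j k ≤ bp j k ∧ 0 ≤ bp j k)
    (hbm : ∀ j k, bm j k ≤ ωM j k ∧ bm j k ≤ ωP j k ∧ bm j k ≤ 0)
    (hbgap : ∀ j k, bm j k < bp j k)
    (Abar : ℤ → ℤ → ℝ)
    -- cell-average relation enforced by the corrected reconstruction
    (havg : ∀ j k, Abar j k
      = (AsP (j - 1) k + AsM j k + AθM j k + AθP j (k - 1)) / 4)
    (a b : ℝ) (ha : 0 < a) (hb : 0 < b)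
    (haBd : ∀ j k, ap j k ≤ a ∧ -am j k ≤ a)
    (hbBd : ∀ j k, bp j k ≤ b ∧ -bm j k ≤ b)
    (hCFL : Δt ≤ 1 / 4 * min (Δs / a) (Δθ / b)) :
    let HF : ℤ → ℤ → ℝ := fun j k =>
      (ap j k * (AsM j k * usM j k) - am j k * (AsP j k * usP j k)) / (ap j k - am j k)
        + ap j k * am j k * (AsP j k - AsM j k) / (ap j k - am j k)
    let HG : ℤ → ℤ → ℝ := fun j k =>
      (bp j k * (AθM j k * ωM j k) - bm j k * (AθP j k * ωP j k)) / (bp j k - bm j k)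
        + bp j k * bm j k * (AθP j k - AθM j k) / (bp j k - bm j k)
    let Anew : ℤ → ℤ → ℝ := fun j k =>
      Abar j k - Δt / Δs * (HF j k - HF (j - 1) k) - Δt / Δθ * (HG j k - HG j (k - 1))
    (∀ j k, 0 ≤ Anew j k) ∧
    (∀ μ : ℝ, 0 ≤ μ → μ ≤ 1 → ∀ j k, 0 ≤ μ * Abar j k + (1 - μ) * Anew j k) := by
  intro HF HG Anew
  have hνs : Δt / Δs * a ≤ 1 / 4 :=
    div_mul_le_of_le_mul_div hΔs ha (hCFL.trans (by gcongr; exact min_le_left _ _))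
  have hνθ : Δt / Δθ * b ≤ 1 / 4 :=
    div_mul_le_of_le_mul_div hΔθ hb (hCFL.trans (by gcongr; exact min_le_right _ _))
  have hF (j k : ℤ) : -(AsP j k / 4) ≤ Δt / Δs * HF j k ∧ Δt / Δs * HF j k ≤ AsM j k / 4 :=
    centralUpwindFlux_cfl_bounds (div_pos hΔt hΔs).le hνs (hAsM j k) (hAsP j k) (hap j k)
      (ham j k) (hagap j k) (haBd j k).1 (haBd j k).2
  have hG (j k : ℤ) : -(AθP j k / 4) ≤ Δt / Δθ * HG j k ∧ Δt / Δθ * HG j k ≤ AθM j k / 4 :=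
    centralUpwindFlux_cfl_bounds (div_pos hΔt hΔθ).le hνθ (hAθM j k) (hAθP j k) (hbp j k)
      (hbm j k) (hbgap j k) (hbBd j k).1 (hbBd j k).2
  have hAnew (j k : ℤ) : 0 ≤ Anew j k := by
    have := hF j k; have := hF (j - 1) k; have := hG j k; have := hG j (k - 1)
    show 0 ≤ Abar j k - Δt / Δs * (HF j k - HF (j - 1) k) - Δt / Δθ * (HG j k - HG j (k - 1))
    rw [havg j k]
    linarith
  have hAbar (j k : ℤ) : 0 ≤ Abar j k := by
    rw [havg j k]
    have := hAsP (j - 1) k; have := hAsM j k; have := hAθM j k; have := hAθP j (k - 1)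
    positivity
  exact ⟨hAnew, fun μ hμ0 hμ1 j k =>
    add_nonneg (mul_nonneg hμ0 (hAbar j k)) (mul_nonneg (by linarith) (hAnew j k))⟩
end

section
/- Let γ > 0, R > 0 and Γ ∈ ℝ. Define, for 0 ≤ r ≤ R, the Jacobian factor |J|(r) = r·(1 − (r/R)·Γ), the area A = ∫₀^R |J|(r) dr = R²·(1/2 − Γ/3), the axial profile W(r) = 1 − (r/R)^γ (so that V_s* = (r/|J|)·W and V_s*·|J| = r·W), and e_s = A / ∫₀^R r·W(r) dr. Suppose A ≠ 0. Then ψ_{s,o} := (e_s/A)·∫₀^R (|J|(r)/r)²·|J|(r)·V_s*(r) dr = (e_s/A)·∫₀^R (1 − (r/R)Γ)²·r·W(r) dr equals 1 − (4(γ+2)/(3(γ+3)))·Γ + ((γ+2)/(2(γ+4)))·Γ². -/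
/-!
Both integrals defining the Coriolis factor are combinations of the moments
`∫₀^R r^n (1 - (r/R)^γ) dr = R^(n+1) γ / ((n+1)(n+γ+1))`: expanding `(1 - (r/R)Γ)²`
makes the numerator the combination of the moments `n = 1, 2, 3` with coefficients
`1, -2Γ/R, (Γ/R)²`, while the denominator is the moment `n = 1`.
-/

open intervalIntegral Real Set
open scoped Interval

lemma integral_pow_mul_div_rpow {R γ : ℝ} (hR : 0 < R) (n : ℕ) (hγ : -1 < n + γ) :
    ∫ r in (0:ℝ)..R, r ^ n * (r / R) ^ γ = R ^ (n + 1) / (n + γ + 1) := by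
  have hpow : ∀ r ∈ Ι (0:ℝ) R, r ^ n * (r / R) ^ γ = (R ^ γ)⁻¹ * r ^ ((n:ℝ) + γ) := by
    intro r hr
    rw [uIoc_of_le hR.le] at hr
    rw [div_rpow hr.1.le hR.le, rpow_add hr.1, rpow_natCast]
    ring
  rw [integral_congr_ae (Filter.Eventually.of_forall hpow), integral_const_mul,
    integral_rpow (Or.inl hγ), zero_rpow (by linarith), rpow_add hR, rpow_add hR,
    rpow_natCast, rpow_one]
  field_simp
  ring

lemma intervalIntegrable_pow_mul_div_rpow {R γ : ℝ} (hR : 0 < R) (n : ℕ) (hγ : -1 < n + γ) :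
    IntervalIntegrable (fun r => r ^ n * (r / R) ^ γ) MeasureTheory.volume 0 R := by
  refine intervalIntegrable_of_integral_ne_zero ?_
  rw [integral_pow_mul_div_rpow hR n hγ]
  have : 0 < (n:ℝ) + γ + 1 := by linarith
  positivity

lemma intervalIntegrable_pow_mul_one_sub_div_rpow {R γ : ℝ} (hR : 0 < R) (n : ℕ)
    (hγ : -1 < n + γ) :
    IntervalIntegrable (fun r => r ^ n * (1 - (r / R) ^ γ)) MeasureTheory.volume 0 R := by
  simp only [mul_one_sub]
  exact (intervalIntegrable_pow _).sub (intervalIntegrable_pow_mul_div_rpow hR n hγ)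

lemma integral_pow_mul_one_sub_div_rpow {R γ : ℝ} (hR : 0 < R) (n : ℕ) (hγ : -1 < n + γ) :
    ∫ r in (0:ℝ)..R, r ^ n * (1 - (r / R) ^ γ) = R ^ (n + 1) * γ / ((n + 1) * (n + γ + 1)) := by
  simp only [mul_one_sub]
  rw [integral_sub (intervalIntegrable_pow _) (intervalIntegrable_pow_mul_div_rpow hR n hγ),
    integral_pow, integral_pow_mul_div_rpow hR n hγ]
  have : (n:ℝ) + γ + 1 ≠ 0 := by linarith
  field_simp
  ring

lemma integral_mul_one_sub_div_mul {R : ℝ} (hR : R ≠ 0) (Γ : ℝ) :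
    ∫ r in (0:ℝ)..R, r * (1 - r / R * Γ) = R ^ 2 * (1 / 2 - Γ / 3) := by
  have : (fun r => r * (1 - r / R * Γ)) = fun r => r - Γ / R * r ^ 2 := by
    funext r
    field_simp
  rw [this, integral_sub intervalIntegrable_id ((intervalIntegrable_pow 2).const_mul _),
    integral_const_mul, integral_id, integral_pow]
  field_simp
  ring

lemma integral_sq_one_sub_div_mul_mul_one_sub_div_rpow {R γ : ℝ} (hR : 0 < R) (hγ : -2 < γ)
    (Γ : ℝ) :
    ∫ r in (0:ℝ)..R, (1 - r / R * Γ) ^ 2 * (r * (1 - (r / R) ^ γ))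
      = R ^ 2 * γ * (1 / (2 * (γ + 2)) - 2 * Γ / (3 * (γ + 3)) + Γ ^ 2 / (4 * (γ + 4))) := by
  set f : ℕ → ℝ → ℝ := fun n r => r ^ n * (1 - (r / R) ^ γ)
  have hγn (n : ℕ) (hn : 1 ≤ n) : -1 < (n:ℝ) + γ := by
    have : (1:ℝ) ≤ n := by exact_mod_cast hn
    linarith
  have hf (n : ℕ) (hn : 1 ≤ n) : IntervalIntegrable (f n) MeasureTheory.volume 0 R :=
    intervalIntegrable_pow_mul_one_sub_div_rpow hR n (hγn n hn)
  have hmoment (n : ℕ) (hn : 1 ≤ n) := integral_pow_mul_one_sub_div_rpow hR n (hγn n hn)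
  have hexpand : (fun r => (1 - r / R * Γ) ^ 2 * (r * (1 - (r / R) ^ γ)))
      = fun r => f 1 r - 2 * Γ / R * f 2 r + (Γ / R) ^ 2 * f 3 r := by
    funext r
    simp only [f]
    ring
  rw [hexpand, integral_add ((hf 1 le_rfl).sub ((hf 2 (by norm_num)).const_mul _))
      ((hf 3 (by norm_num)).const_mul _),
    integral_sub (hf 1 le_rfl) ((hf 2 (by norm_num)).const_mul _),
    integral_const_mul, integral_const_mul, hmoment 1 le_rfl, hmoment 2 (by norm_num),
    hmoment 3 (by norm_num)]
  have h2 : 2 + γ ≠ 0 := by linarith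
  have h3 : 3 + γ ≠ 0 := by linarith
  have h4 : 4 + γ ≠ 0 := by linarith
  norm_num
  field_simp
  ring

/-- For the Hagen–Poiseuille axial profile, the Coriolis factor
`ψ_{s,o} = (e_s/A)·∫₀^R (1 − (r/R)Γ)²·r·W(r) dr` is the explicit quadratic
`1 − (4(γ+2)/(3(γ+3)))Γ + ((γ+2)/(2(γ+4)))Γ²` of the curvature parameter `Γ`. -/
theorem stmt16 (γ R Γ : ℝ) (hγ : 0 < γ) (hR : 0 < R)
    (hA : R ^ 2 * (1 / 2 - Γ / 3) ≠ 0) :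
    let A := R ^ 2 * (1 / 2 - Γ / 3)
    let W : ℝ → ℝ := fun r => 1 - (r / R) ^ γ
    let es := A / ∫ r in (0:ℝ)..R, r * W r
    (∫ r in (0:ℝ)..R, r * (1 - r / R * Γ)) = A ∧
    es / A * ∫ r in (0:ℝ)..R, (1 - r / R * Γ) ^ 2 * (r * W r)
      = 1 - 4 * (γ + 2) / (3 * (γ + 3)) * Γ + (γ + 2) / (2 * (γ + 4)) * Γ ^ 2 := by
  intro A W es
  have hflux : ∫ r in (0:ℝ)..R, r * W r = R ^ 2 * γ / (2 * (γ + 2)) := by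
    convert integral_pow_mul_one_sub_div_rpow (γ := γ) hR 1 (by simp; linarith) using 1
    · simp only [W, pow_one]
    · push_cast
      ring
  refine ⟨integral_mul_one_sub_div_mul hR.ne' Γ, ?_⟩
  rw [show es / A = (∫ r in (0:ℝ)..R, r * W r)⁻¹ from div_div_cancel_left' hA,
    integral_sq_one_sub_div_mul_mul_one_sub_div_rpow hR (by linarith), hflux]
  field_simp
  ring
end

section
/- Let γ > 0, R > 0, Γ ∈ ℝ, u ∈ ℝ, and assume A := R²·(1/2 − Γ/3) and e_s := A/∫₀^R r·(1 − (r/R)^γ) dr, so that e_s = 2A(γ+2)/(γR²) since ∫₀^R r(1 − (r/R)^γ) dr = R²γ/(2(γ+2)). Define, for 0 < r ≤ R, |J|(r) = r(1 − (r/R)Γ) and V_s(r) = e_s·(r/|J|(r))·(1 − (r/R)^γ)·u. Then the function r ↦ |J|(r)·d/dr[ (|J|(r)/r)²·V_s(r) ] evaluated at r = R equals −(γ+2)·(1 − Γ)²·(2A/R²)·u. -/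
/-! Away from the axis the factor `r / |J|` of the profile cancels against `(|J| / r)²`, so near
`r = R` the bracket is `e_s u (1 - (r/R) Γ)(1 - (r/R)^γ)`. Its second factor vanishes at `R`,
so only `(1 - Γ) · ∂_r(1 - (r/R)^γ) = -(1 - Γ) γ / R` survives, and `e_s γ = 2A(γ+2)/R²`. -/

open Real Set

theorem integral_mul_one_sub_div_rpow {γ R : ℝ} (hγ : -2 < γ) (hR : 0 < R) :
    ∫ r in (0:ℝ)..R, r * (1 - (r / R) ^ γ) = R ^ 2 * γ / (2 * (γ + 2)) := by
  have h_ae : ∀ᵐ r ∂MeasureTheory.volume, r ∈ uIoc (0:ℝ) R →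
      r * (1 - (r / R) ^ γ) = r - r ^ (γ + 1) / R ^ γ := by
    refine Filter.Eventually.of_forall fun r hr => ?_
    rw [uIoc_of_le hR.le] at hr
    rw [div_rpow hr.1.le hR.le, rpow_add hr.1, rpow_one]
    ring
  have h_pow : IntervalIntegrable (fun r : ℝ => r ^ (γ + 1) / R ^ γ) MeasureTheory.volume 0 R :=
    (intervalIntegral.intervalIntegrable_rpow' (by linarith)).div_const _
  have hγ2 : γ + 2 ≠ 0 := by linarith
  rw [intervalIntegral.integral_congr_ae h_ae,
    intervalIntegral.integral_sub intervalIntegral.intervalIntegrable_id h_pow,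
    intervalIntegral.integral_div, integral_rpow (Or.inl (by linarith)), integral_id,
    zero_rpow (by linarith), show γ + 1 + 1 = γ + 2 by ring, rpow_add hR, rpow_two]
  field_simp
  ring

theorem hasDerivAt_div_rpow_self {R : ℝ} (γ : ℝ) (hR : R ≠ 0) :
    HasDerivAt (fun r => (r / R) ^ γ) (γ / R) R := by
  have h := ((hasDerivAt_id R).div_const R).rpow_const (p := γ) (Or.inl (by simp [hR]))
  simpa [hR, div_eq_mul_inv, mul_comm] using h

theorem hasDerivAt_one_sub_mul_one_sub_div_rpow {R : ℝ} (γ Γ : ℝ) (hR : R ≠ 0) :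
    HasDerivAt (fun r => (1 - r / R * Γ) * (1 - (r / R) ^ γ)) (-((1 - Γ) * γ / R)) R := by
  have h_lin : HasDerivAt (fun r => 1 - r / R * Γ) (-(1 / R * Γ)) R :=
    (((hasDerivAt_id R).div_const R).mul_const Γ).const_sub 1
  refine (h_lin.mul ((hasDerivAt_div_rpow_self γ hR).const_sub 1)).congr_deriv ?_
  simp [hR]
  ring

-- At `c = 0` both sides vanish because `r / 0 = 0`.
theorem sq_div_mul_div_mul {r : ℝ} (hr : r ≠ 0) (c e w u : ℝ) :
    (r * c / r) ^ 2 * (e * (r / (r * c)) * w * u) = e * u * (c * w) := by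
  rcases eq_or_ne c 0 with rfl | hc
  · simp
  · field_simp

/-- The closed form of the axial viscous source term of the 2D blood-flow model:
`[|J| ∂_r((|J|/r)² V_s)]_{r=R} = −(γ+2)(1−Γ)²(2A/R²)u` for the Hagen–Poiseuille
profile `V_s = e_s(r/|J|)(1 − (r/R)^γ)u`. -/
theorem stmt19 (γ R Γ u : ℝ) (hγ : 0 < γ) (hR : 0 < R) :
    let A := R ^ 2 * (1 / 2 - Γ / 3)
    let J : ℝ → ℝ := fun r => r * (1 - r / R * Γ)
    let es := A / ∫ r in (0:ℝ)..R, r * (1 - (r / R) ^ γ)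
    let Vs : ℝ → ℝ := fun r => es * (r / J r) * (1 - (r / R) ^ γ) * u
    (∫ r in (0:ℝ)..R, r * (1 - (r / R) ^ γ)) = R ^ 2 * γ / (2 * (γ + 2)) ∧
    es = 2 * A * (γ + 2) / (γ * R ^ 2) ∧
    J R * deriv (fun r' => (J r' / r') ^ 2 * Vs r') R
      = -(γ + 2) * (1 - Γ) ^ 2 * (2 * A / R ^ 2) * u := by
  intro A J es Vs
  have h_int := integral_mul_one_sub_div_rpow (γ := γ) (by linarith) hR
  have h_es : es = 2 * A * (γ + 2) / (γ * R ^ 2) := by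
    rw [show es = A / _ from rfl, h_int, div_div_eq_mul_div]
    ring
  refine ⟨h_int, h_es, ?_⟩
  have h_near : (fun r => (J r / r) ^ 2 * Vs r)
      =ᶠ[nhds R] fun r => es * u * ((1 - r / R * Γ) * (1 - (r / R) ^ γ)) := by
    filter_upwards [eventually_gt_nhds hR] with r hr
    exact sq_div_mul_div_mul hr.ne' _ _ _ _
  rw [h_near.deriv_eq,
    ((hasDerivAt_one_sub_mul_one_sub_div_rpow γ Γ hR.ne').const_mul (es * u)).deriv, h_es]
  simp only [J]
  field_simp
end
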